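/- Let 1 < α < 2 and n ≥ 2. Then (n-1)^α · ∑_{k=0}^{n-1} g_k^α < n^α · ∑_{k=0}^{n} g_k^α. -/

import Mathlib

/-!
Since `∑_{k ≤ m} g_k^α = g_m^{α-1}` and `g_{m+1}^{α-1} = (m + 1 - α)/(m + 1) · g_m^{α-1}`, with
`g_m^{α-1} < 0` for `m ≥ 1` because `0 < α - 1 < 1`, the claim for `n = m + 1` reduces to
`(m + 1)^α (1 - α/(m + 1)) < m^α`, which is the strict Bernoulli inequality for `(1 - 1/(m + 1))^α`.
-/

/-- Grünwald–Letnikov coefficient `g_k^α = (-1)^k * binom(α,k)`. -/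
noncomputable def gl (a : ℝ) (k : ℕ) : ℝ :=
  (-1 : ℝ) ^ k * (∏ j ∈ Finset.range k, (a - j)) / (Nat.factorial k : ℝ)

/-- Shifted Grünwald weights. -/
noncomputable def glw (a : ℝ) : ℕ → ℝ
  | 0 => a / 2 * gl a 0
  | (k+1) => a / 2 * gl a (k+1) + (2 - a) / 2 * gl a k

/-- Second-order Lubich coefficients `l_m^{2,γ}`. -/
noncomputable def lub2 (g : ℝ) (m : ℕ) : ℝ :=
  (3/2 : ℝ) ^ g * ∑ k ∈ Finset.range (m+1), (1/3 : ℝ) ^ k * gl g k * gl g (m - k)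

/-- The Toeplitz matrix `B_α` of size `(M-1) × (M-1)`. -/
noncomputable def Bmat (a : ℝ) (M : ℕ) : Matrix (Fin (M-1)) (Fin (M-1)) ℝ :=
  fun i j => if (j : ℕ) ≤ (i : ℕ) + 1 then glw a ((i : ℕ) + 1 - (j : ℕ)) else 0

/-- The symmetric matrix `A_α = B_α + B_αᵀ`. -/
noncomputable def Amat (a : ℝ) (M : ℕ) : Matrix (Fin (M-1)) (Fin (M-1)) ℝ :=
  Bmat a M + (Bmat a M).transpose

lemma gl_zero (a : ℝ) : gl a 0 = 1 := by
  simp [gl]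

lemma gl_succ (a : ℝ) (k : ℕ) : gl a (k + 1) = ((k : ℝ) - a) / (k + 1) * gl a k := by
  have hk : (k.factorial : ℝ) ≠ 0 := Nat.cast_ne_zero.2 k.factorial_ne_zero
  simp only [gl, Finset.prod_range_succ, Nat.factorial_succ, Nat.cast_mul, pow_succ]
  push_cast
  field_simp
  ring

lemma sum_range_succ_gl (a : ℝ) (n : ℕ) :
    ∑ k ∈ Finset.range (n + 1), gl a k = gl (a - 1) n := by
  induction n with
  | zero => simp [gl_zero]
  | succ n ih =>
    rw [Finset.sum_range_succ, ih]
    have hprod : ∏ j ∈ Finset.range (n + 1), (a - j) =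
        (∏ j ∈ Finset.range n, (a - 1 - j)) * a := by
      rw [Finset.prod_range_succ']
      congr 1
      · exact Finset.prod_congr rfl fun j _ => by push_cast; ring
      · simp
    have hk : (n.factorial : ℝ) ≠ 0 := Nat.cast_ne_zero.2 n.factorial_ne_zero
    simp only [gl, hprod, Finset.prod_range_succ, Nat.factorial_succ, Nat.cast_mul, pow_succ]
    push_cast
    field_simp
    ring

lemma gl_neg_of_pos_of_lt_one {b : ℝ} (hb0 : 0 < b) (hb1 : b < 1) {m : ℕ} (hm : 1 ≤ m) :
    gl b m < 0 := by
  induction m, hm using Nat.le_induction with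
  | base => simpa [gl_succ, gl_zero] using hb0
  | succ m hm ih =>
    rw [gl_succ]
    have hmb : 0 < (m : ℝ) - b := by
      have : (1 : ℝ) ≤ m := by exact_mod_cast hm
      linarith
    exact mul_neg_of_pos_of_neg (by positivity) ih

lemma add_one_rpow_mul_one_sub_div_lt_rpow {x α : ℝ} (hx : 0 ≤ x) (hα : 1 < α) :
    (x + 1) ^ α * (1 - α / (x + 1)) < x ^ α := by
  have hx1 : 0 < x + 1 := by linarith
  have hs : -1 ≤ -1 / (x + 1) := by
    rw [le_div_iff₀ hx1]
    linarith
  have hbernoulli : 1 + α * (-1 / (x + 1)) < (1 + -1 / (x + 1)) ^ α :=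
    one_add_mul_self_lt_rpow_one_add hs (by positivity) hα
  have hratio : 1 + -1 / (x + 1) = x / (x + 1) := by
    field_simp
    ring
  calc (x + 1) ^ α * (1 - α / (x + 1))
      = (x + 1) ^ α * (1 + α * (-1 / (x + 1))) := by ring
    _ < (x + 1) ^ α * (x / (x + 1)) ^ α := by rw [← hratio]; gcongr
    _ = x ^ α := by rw [← Real.mul_rpow hx1.le (by positivity), mul_div_cancel₀ x hx1.ne']

theorem stmt5 (α : ℝ) (hα1 : 1 < α) (hα2 : α < 2) (n : ℕ) (hn : 2 ≤ n) :
    ((n : ℝ) - 1) ^ α * ∑ k ∈ Finset.range n, gl α k <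
      (n : ℝ) ^ α * ∑ k ∈ Finset.range (n+1), gl α k := by
  obtain ⟨m, rfl⟩ : ∃ m, n = m + 1 := ⟨n - 1, by omega⟩
  have hneg : gl (α - 1) m < 0 := gl_neg_of_pos_of_lt_one (by linarith) (by linarith) (by omega)
  have hkey := add_one_rpow_mul_one_sub_div_lt_rpow (Nat.cast_nonneg m) hα1
  rw [sum_range_succ_gl, sum_range_succ_gl, gl_succ]
  push_cast
  calc ((m : ℝ) + 1 - 1) ^ α * gl (α - 1) m
      = (m : ℝ) ^ α * gl (α - 1) m := by rw [add_sub_cancel_right]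
    _ < ((m + 1) ^ α * (1 - α / (m + 1))) * gl (α - 1) m := mul_lt_mul_of_neg_right hkey hneg
    _ = ((m : ℝ) + 1) ^ α * (((m : ℝ) - (α - 1)) / (m + 1) * gl (α - 1) m) := by
      field_simp
      ring
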